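/- The marginal density of a noncentral chi-squared statistic with k degrees of freedom, whose noncentrality parameter has a Gamma(k/2+1, 1/(2τ²)) prior, equals the mixture (1/(τ²+1))·g(h; k/2, 1/(2(τ²+1))) + (τ²/(τ²+1))·g(h; k/2+1, 1/(2(τ²+1))), where g(·; α, β) is the Gamma density with shape α and rate β. -/

import Mathlib

/-!
The noncentral χ²ₖ density with noncentrality `λ` is the Poisson(`λ/2`) mixture of the central
χ²_{k+2i} densities, which are the Gamma(`r + i`, `1/2`) densities, `r = k/2`. All terms are
nonnegative, so the integral against the Gamma(`r + 1`, `β`) prior can be taken term by term, and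
integrating a Poisson(`c l`) weight against a Gamma(`a`, `β`) density in `l` gives the negative
binomial weight with shape `a` and success probability `p = β / (β + c)`, here `1 / (τ² + 1)`.
Because the prior's shape `r + 1` exceeds `r` by exactly one, `Γ(r + 1 + i) / Γ(r + i) = r + i`,
and the series collapses to `∑ (r + i) yⁱ / i! = (r + y) eʸ` with `y = (1 - p) h / 2`; its two
parts are the two Gamma components.
-/

open Real MeasureTheory Set ProbabilityTheory
open scoped Nat

theorem hasSum_add_mul_pow_div_factorial (r y : ℝ) :
    HasSum (fun i : ℕ => (r + i) * y ^ i / i !) ((r + y) * exp y) := by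
  have hexp : HasSum (fun i : ℕ => y ^ i / i !) (exp y) :=
    Real.exp_eq_exp_ℝ ▸ NormedSpace.expSeries_div_hasSum_exp y
  have hderiv : HasSum (fun i : ℕ => i * y ^ i / i !) (y * exp y) := by
    rw [← hasSum_nat_add_iff' 1, Finset.sum_range_one, Nat.cast_zero, zero_mul, zero_div,
      sub_zero]
    refine (hexp.mul_left y).congr_fun fun i => ?_
    push_cast [Nat.factorial_succ, pow_succ]
    field_simp
  rw [add_mul]
  exact ((hexp.mul_left r).add hderiv).congr_fun fun i => by ring

theorem integral_tsum_of_nonneg {α ι : Type*} [MeasurableSpace α] {μ : Measure α}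
    [Countable ι] {F : ι → α → ℝ} {S : ℝ} (hF_int : ∀ i, Integrable (F i) μ)
    (hF_nonneg : ∀ i, 0 ≤ᵐ[μ] F i) (hS : HasSum (fun i => ∫ a, F i a ∂μ) S) :
    ∫ a, ∑' i, F i a ∂μ = S := by
  have hnorm : ∀ i, ∫ a, ‖F i a‖ ∂μ = ∫ a, F i a ∂μ := fun i =>
    integral_congr_ae ((hF_nonneg i).mono fun _ ha => Real.norm_of_nonneg ha)
  refine (hasSum_integral_of_summable_integral_norm hF_int ?_).unique hS
  simpa only [hnorm] using hS.summable

theorem integrableOn_rpow_mul_exp_neg_mul_Ioi {a b : ℝ} (ha : 0 < a) (hb : 0 < b) :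
    IntegrableOn (fun t => t ^ (a - 1) * exp (-(b * t))) (Ioi 0) :=
  .of_integral_ne_zero (by rw [integral_rpow_mul_exp_neg_mul_Ioi ha hb]; positivity)

theorem gammaPDFReal_of_nonneg {a r x : ℝ} (hx : 0 ≤ x) :
    gammaPDFReal a r x = r ^ a / Gamma a * x ^ (a - 1) * exp (-(r * x)) :=
  if_pos hx

theorem gammaPDFReal_one_half {a x : ℝ} (hx : 0 ≤ x) :
    gammaPDFReal a (1 / 2) x = x ^ (a - 1) * exp (-x / 2) / (2 ^ a * Gamma a) := by
  rw [gammaPDFReal_of_nonneg hx, div_rpow zero_le_one zero_le_two, one_rpow]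
  ring_nf

theorem gammaPDFReal_add_one {a r x : ℝ} (ha : 0 < a) (hr : 0 ≤ r) (hx : 0 ≤ x) :
    gammaPDFReal (a + 1) r x = r * x / a * gammaPDFReal a r x := by
  have hxa : x ^ a = x ^ (a - 1) * x := by
    rw [← rpow_add_one' hx (by linarith), sub_add_cancel]
  rw [gammaPDFReal_of_nonneg hx, gammaPDFReal_of_nonneg hx, Gamma_add_one ha.ne',
    add_sub_cancel_right, rpow_add_one' hr (by linarith), hxa]
  field_simp

noncomputable def negBinomialPMFReal (a p : ℝ) (i : ℕ) : ℝ :=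
  Gamma (a + i) / (Gamma a * i !) * p ^ a * (1 - p) ^ i

section PoissonGammaMixture

variable {a β c : ℝ}

theorem poisson_mul_gammaPDFReal {l : ℝ} (hl : 0 < l) (i : ℕ) :
    exp (-(c * l)) * (c * l) ^ i / i ! * gammaPDFReal a β l =
      β ^ a * c ^ i / (Gamma a * i !) * (l ^ (a + i - 1) * exp (-((β + c) * l))) := by
  have hpow : l ^ (a + i - 1) = l ^ (a - 1) * l ^ i := by
    rw [add_sub_right_comm, rpow_add hl, rpow_natCast]
  have hexp : exp (-((β + c) * l)) = exp (-(c * l)) * exp (-(β * l)) := by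
    rw [← exp_add]; ring_nf
  rw [gammaPDFReal_of_nonneg hl.le, hpow, hexp, mul_pow]
  field_simp

theorem integrableOn_poisson_mul_gammaPDFReal (ha : 0 < a) (hβc : 0 < β + c) (i : ℕ) :
    IntegrableOn (fun l => exp (-(c * l)) * (c * l) ^ i / i ! * gammaPDFReal a β l) (Ioi 0) :=
  IntegrableOn.congr_fun
    ((integrableOn_rpow_mul_exp_neg_mul_Ioi (by positivity) hβc).const_mul _)
    (fun _ hl => (poisson_mul_gammaPDFReal hl i).symm) measurableSet_Ioi

theorem integral_poisson_mul_gammaPDFReal (ha : 0 < a) (hβ : 0 < β) (hc : 0 ≤ c) (i : ℕ) :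
    ∫ l in Ioi 0, exp (-(c * l)) * (c * l) ^ i / i ! * gammaPDFReal a β l =
      negBinomialPMFReal a (β / (β + c)) i := by
  have hβc : 0 < β + c := by positivity
  have hq : 1 - β / (β + c) = c / (β + c) := by field_simp; ring
  rw [setIntegral_congr_fun measurableSet_Ioi fun _ hl => poisson_mul_gammaPDFReal hl i,
    integral_const_mul, integral_rpow_mul_exp_neg_mul_Ioi (by positivity) hβc,
    negBinomialPMFReal, rpow_add (by positivity), rpow_natCast, div_rpow hβ.le hβc.le,
    div_rpow zero_le_one hβc.le, one_rpow, hq]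
  simp only [div_pow, one_pow]
  field_simp

end PoissonGammaMixture

section NegBinomialGammaMixture

variable {r p b x : ℝ}

theorem negBinomialPMFReal_mul_gammaPDFReal (hr : 0 < r) (hb : 0 ≤ b) (hx : 0 < x) (i : ℕ) :
    negBinomialPMFReal (r + 1) p i * gammaPDFReal (r + i) b x =
      p ^ (r + 1) * b ^ r * x ^ (r - 1) * exp (-(b * x)) / Gamma (r + 1) *
        ((r + i) * ((1 - p) * b * x) ^ i / i !) := by
  have hri : r + i ≠ 0 := by positivity
  have := Gamma_pos_of_pos (by positivity : 0 < r + i)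
  have := Gamma_pos_of_pos (by positivity : 0 < r + 1)
  rw [negBinomialPMFReal, gammaPDFReal_of_nonneg hx.le, add_right_comm, Gamma_add_one hri,
    rpow_add' hb hri, add_sub_right_comm, rpow_add hx, rpow_natCast, rpow_natCast, mul_pow,
    mul_pow]
  field_simp

theorem hasSum_negBinomialPMFReal_mul_gammaPDFReal (hr : 0 < r) (hp : 0 ≤ p) (hb : 0 ≤ b)
    (hx : 0 < x) :
    HasSum (fun i : ℕ => negBinomialPMFReal (r + 1) p i * gammaPDFReal (r + i) b x)
      (p * gammaPDFReal r (p * b) x + (1 - p) * gammaPDFReal (r + 1) (p * b) x) := by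
  have hsum := (hasSum_add_mul_pow_div_factorial r ((1 - p) * b * x)).mul_left
    (p ^ (r + 1) * b ^ r * x ^ (r - 1) * exp (-(b * x)) / Gamma (r + 1))
  convert! hsum.congr_fun (negBinomialPMFReal_mul_gammaPDFReal hr hb hx) using 1
  have hexp : exp (-(b * x)) * exp ((1 - p) * b * x) = exp (-(p * b * x)) := by
    rw [← exp_add]; ring_nf
  have := Gamma_pos_of_pos hr
  rw [gammaPDFReal_add_one hr (by positivity) hx.le, gammaPDFReal_of_nonneg hx.le,
    Gamma_add_one hr.ne', rpow_add_one' hp (by positivity), mul_rpow hp hb, ← hexp]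
  field_simp

end NegBinomialGammaMixture

theorem integral_tsum_poisson_mul_gammaPDFReal {r β c b x : ℝ} (hr : 0 < r) (hβ : 0 < β)
    (hc : 0 ≤ c) (hb : 0 < b) (hx : 0 < x) :
    ∫ l in Ioi 0, (∑' i : ℕ, exp (-(c * l)) * (c * l) ^ i / i ! * gammaPDFReal (r + i) b x) *
        gammaPDFReal (r + 1) β l =
      β / (β + c) * gammaPDFReal r (β / (β + c) * b) x +
        (1 - β / (β + c)) * gammaPDFReal (r + 1) (β / (β + c) * b) x := by
  set F : ℕ → ℝ → ℝ := fun i l =>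
    exp (-(c * l)) * (c * l) ^ i / i ! * gammaPDFReal (r + 1) β l * gammaPDFReal (r + i) b x
  have hF : ∀ l, (∑' i : ℕ, exp (-(c * l)) * (c * l) ^ i / i ! * gammaPDFReal (r + i) b x) *
      gammaPDFReal (r + 1) β l = ∑' i, F i l := fun l => by
    rw [← tsum_mul_right]
    exact tsum_congr fun i => by ring
  have hF_int : ∀ i, IntegrableOn (F i) (Ioi 0) := fun i =>
    (integrableOn_poisson_mul_gammaPDFReal (by positivity) (by positivity) i).mul_const _
  have hF_nonneg : ∀ i, 0 ≤ᵐ[volume.restrict (Ioi 0)] F i := fun i =>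
    ae_restrict_of_forall_mem measurableSet_Ioi fun l (hl : 0 < l) =>
      mul_nonneg (mul_nonneg (by positivity) (gammaPDFReal_nonneg (by positivity) hβ l))
        (gammaPDFReal_nonneg (by positivity) hb x)
  have hF_sum : HasSum (fun i => ∫ l in Ioi 0, F i l)
      (β / (β + c) * gammaPDFReal r (β / (β + c) * b) x +
        (1 - β / (β + c)) * gammaPDFReal (r + 1) (β / (β + c) * b) x) := by
    simp only [F, integral_mul_const,
      integral_poisson_mul_gammaPDFReal (a := r + 1) (by positivity) hβ hc]
    exact hasSum_negBinomialPMFReal_mul_gammaPDFReal hr (by positivity) hb.le hx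
  simp only [hF]
  exact integral_tsum_of_nonneg hF_int hF_nonneg hF_sum

theorem chi_squared_marginal_mixture (k : ℕ) (hk : 0 < k) (τ h : ℝ) (hτ : 0 < τ) (hh : 0 < h)
    (g : ℝ → ℝ → ℝ → ℝ)
    (hg : ∀ α β x, g x α β = β^α * x^(α - 1) * Real.exp (-β * x) / Real.Gamma α) :
    (∫ l in Set.Ioi (0:ℝ),
      (∑' i : ℕ, Real.exp (-l/2) * (l/2)^i / (Nat.factorial i) *
        h^((k:ℝ)/2 + i - 1) * Real.exp (-h/2) / (2^((k:ℝ)/2 + i) * Real.Gamma ((k:ℝ)/2 + i))) *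
      g l ((k:ℝ)/2 + 1) (1/(2*τ^2))) =
    (1/(τ^2 + 1)) * g h ((k:ℝ)/2) (1/(2*(τ^2+1))) +
      (τ^2/(τ^2 + 1)) * g h ((k:ℝ)/2 + 1) (1/(2*(τ^2+1))) := by
  have hg_eq : ∀ {a b x : ℝ}, 0 ≤ x → g x a b = gammaPDFReal a b x := fun hx => by
    rw [hg, gammaPDFReal_of_nonneg hx, neg_mul]; ring
  set r : ℝ := (k : ℝ) / 2
  set β : ℝ := 1 / (2 * τ ^ 2) with hβ_def
  have hintegrand : EqOn
      (fun l => (∑' i : ℕ, exp (-l / 2) * (l / 2) ^ i / i ! *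
        h ^ (r + i - 1) * exp (-h / 2) / (2 ^ (r + i) * Gamma (r + i))) * g l (r + 1) β)
      (fun l => (∑' i : ℕ, exp (-(1 / 2 * l)) * (1 / 2 * l) ^ i / i ! *
        gammaPDFReal (r + i) (1 / 2) h) * gammaPDFReal (r + 1) β l) (Ioi 0) :=
    fun l (hl : 0 < l) => by
      simp only [hg_eq hl.le, gammaPDFReal_one_half hh.le]
      congr 1
      exact tsum_congr fun i => by ring_nf
  have hp : β / (β + 1 / 2) = 1 / (τ ^ 2 + 1) := by rw [hβ_def]; field_simp; ring
  rw [setIntegral_congr_fun measurableSet_Ioi hintegrand,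
    integral_tsum_poisson_mul_gammaPDFReal (by positivity) (by positivity) (by norm_num)
      (by norm_num) hh, hp, hg_eq hh.le, hg_eq hh.le,
    show 1 / (τ ^ 2 + 1) * (1 / 2) = 1 / (2 * (τ ^ 2 + 1)) by field_simp,
    show 1 - 1 / (τ ^ 2 + 1) = τ ^ 2 / (τ ^ 2 + 1) by field_simp; ring]
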